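/- (Classification of $H_{ij}$-periodic $p$-harmonic functions) Let $g : \mathbb{Z} \to \mathbb{R}$ and suppose $u = g \circ \phi$ is $p$-harmonic ($\Delta_p u(x) = 0$ for all $x \in G_k$). Then there exists a constant $c \in \mathbb{R}$ such that $g(n+1) - g(n) = c \cdot \varrho_n$ for every $n \in \mathbb{Z}$; in particular, $u$ is determined by the two real parameters $g(0)$ and $c$. -/

import Mathlib

open scoped BigOperators

noncomputable section

/-- The group representation `G_k` of the Cayley tree of order `k`:
the free product of `k+1` copies of the cyclic group of order two. -/
abbrev G (k : ℕ) : Type := Monoid.CoprodI (fun _ : Fin (k + 1) => Multiplicative (ZMod 2))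

/-- The generators `a_0, ..., a_k` of `G_k`. -/
def gen (k : ℕ) (s : Fin (k + 1)) : G k :=
  Monoid.CoprodI.of (i := s) (Multiplicative.ofAdd (1 : ZMod 2))

/-- `φ_p(t) = |t|^(p-2) t` (real powers). -/
noncomputable def phiP (p t : ℝ) : ℝ := |t| ^ (p - 2) * t

/-- The discrete `p`-Laplacian on the Cayley tree with resistances `r`:
`Δ_p u (x) = ∑_{s=0}^{k} φ_p ((u (x a_s) - u x) / r (x, x a_s))`. -/
noncomputable def pLap (k : ℕ) (p : ℝ) (r : G k × G k → ℝ) (u : G k → ℝ) (x : G k) : ℝ :=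
  ∑ s : Fin (k + 1), phiP p ((u (x * gen k s) - u x) / r (x, x * gen k s))

/-- A function `u : G_k → ℝ` is `H`-periodic if `u (y x) = u x` for all `y ∈ H`, `x ∈ G_k`. -/
def IsPeriodic (k : ℕ) (H : Subgroup (G k)) (u : G k → ℝ) : Prop :=
  ∀ y ∈ H, ∀ x : G k, u (y * x) = u x

/-- The coset index `φ(x) = ρ(x)(0)` associated to a permutation action `ρ` of `G_k` on `ℤ`. -/
def cosetIdx {k : ℕ} (ρ : G k →* Equiv.Perm ℤ) (x : G k) : ℤ := ρ x 0

/-! Every `ρ x` is an isometry of `ℤ`, being a product of the isometries `ρ a_s`. Hence at a vertex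
`x` with `φ x = n` one of `x a_i, x a_j` has index `n + 1`, the other `n - 1`, and every other
neighbour has index `n`. Harmonicity at `x` thus reads
`φ_p((g (n+1) - g n) / ϱ n) + φ_p((g (n-1) - g n) / ϱ (n-1)) = 0`, and as `φ_p` is odd and strictly
increasing, `(g (n+1) - g n) / ϱ n = (g n - g (n-1)) / ϱ (n-1)`. Since `φ` is onto `ℤ`, this
holds for every `n`. -/

open Function

lemma phiP_neg (p t : ℝ) : phiP p (-t) = -phiP p t := by
  simp only [phiP, abs_neg, mul_neg]

lemma phiP_of_nonneg {p t : ℝ} (hp : p ≠ 1) (ht : 0 ≤ t) : phiP p t = t ^ (p - 1) := by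
  rcases ht.eq_or_lt with rfl | ht
  · simp [phiP, Real.zero_rpow (sub_ne_zero.mpr hp)]
  · rw [phiP, abs_of_pos ht, ← Real.rpow_add_one ht.ne']
    ring_nf

lemma phiP_strictMono {p : ℝ} (hp : 1 < p) : StrictMono (phiP p) := by
  refine strictMono_of_odd_strictMonoOn_nonneg (phiP_neg p) fun s hs t ht hst => ?_
  rw [phiP_of_nonneg hp.ne' hs, phiP_of_nonneg hp.ne' ht]
  exact Real.strictMonoOn_rpow_Ici_of_exponent_pos (by linarith) hs ht hst

lemma eq_neg_of_phiP_add_phiP_eq_zero {p a b : ℝ} (hp : 1 < p) (h : phiP p a + phiP p b = 0) :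
    a = -b :=
  (phiP_strictMono hp).injective <| by rw [phiP_neg]; linarith

lemma Int.abs_sub_eq_of_isometry {f : ℤ → ℤ} (hf : Isometry f) (m n : ℤ) :
    |f m - f n| = |m - n| := by
  have := hf.dist_eq m n
  rw [Int.dist_eq', Int.dist_eq'] at this
  exact_mod_cast this

lemma Int.isometry_apply_one_neg_one {f : ℤ → ℤ} (hf : Isometry f) :
    (f 1 = f 0 + 1 ∧ f (-1) = f 0 - 1) ∨ (f 1 = f 0 - 1 ∧ f (-1) = f 0 + 1) := by
  have h₁ := Int.abs_sub_eq_of_isometry hf 1 0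
  have h₂ := Int.abs_sub_eq_of_isometry hf (-1) 0
  have h₃ := Int.abs_sub_eq_of_isometry hf 1 (-1)
  norm_num [abs_eq] at h₁ h₂ h₃
  omega

lemma surjective_of_exists_add_one_of_exists_sub_one {α : Type*} [Nonempty α] {φ : α → ℤ}
    (hsucc : ∀ x, ∃ y, φ y = φ x + 1) (hpred : ∀ x, ∃ y, φ y = φ x - 1) : Surjective φ := by
  obtain ⟨x₀⟩ := ‹Nonempty α›
  suffices ∀ n : ℤ, ∃ x, φ x = φ x₀ + n from fun n => by simpa using this (n - φ x₀)
  intro n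
  induction n using Int.induction_on with
  | zero => exact ⟨x₀, by simp⟩
  | succ n ih =>
    obtain ⟨x, hx⟩ := ih
    obtain ⟨y, hy⟩ := hsucc x
    exact ⟨y, by omega⟩
  | pred n ih =>
    obtain ⟨x, hx⟩ := ih
    obtain ⟨y, hy⟩ := hpred x
    exact ⟨y, by omega⟩

lemma exists_mul_of_div_eq_div_sub_one {g ϱ : ℤ → ℝ} (hϱ : ∀ n, ϱ n ≠ 0)
    (h : ∀ n, (g (n + 1) - g n) / ϱ n = (g n - g (n - 1)) / ϱ (n - 1)) :
    ∃ c : ℝ, ∀ n, g (n + 1) - g n = c * ϱ n := by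
  set D : ℤ → ℝ := fun n => (g (n + 1) - g n) / ϱ n
  have hD : Periodic D 1 := fun n => by simpa [D] using h (n + 1)
  refine ⟨D 0, fun n => ?_⟩
  rw [← div_eq_iff (hϱ n)]
  simpa [D] using hD.int_mul_eq n

lemma gen_eq_of_ne_one {k : ℕ} {s : Fin (k + 1)} {m : Multiplicative (ZMod 2)} (hm : m ≠ 1) :
    Monoid.CoprodI.of (i := s) m = gen k s := by
  congr
  revert m
  decide

lemma isometry_of_isometry_gen {k : ℕ} {X : Type*} [PseudoMetricSpace X]
    {ρ : G k →* Equiv.Perm X} (h : ∀ s, Isometry (ρ (gen k s))) (x : G k) : Isometry (ρ x) := by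
  induction x using Monoid.CoprodI.induction_on with
  | one => simpa using isometry_id
  | of s m =>
    obtain rfl | hm := eq_or_ne m 1
    · simpa using isometry_id
    · simpa [gen_eq_of_ne_one hm] using h s
  | mul x y hx hy => simpa using hx.comp hy

lemma pLap_eq_add_of_forall_ne {k : ℕ} (p : ℝ) (r : G k × G k → ℝ) {u : G k → ℝ} {x : G k}
    {a b : Fin (k + 1)} (hab : a ≠ b) (hu : ∀ s, s ≠ a → s ≠ b → u (x * gen k s) = u x) :
    pLap k p r u x = phiP p ((u (x * gen k a) - u x) / r (x, x * gen k a))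
      + phiP p ((u (x * gen k b) - u x) / r (x, x * gen k b)) := by
  rw [pLap, ← Finset.sum_subset (Finset.subset_univ {a, b}), Finset.sum_pair hab]
  intro s _ hs
  simp only [Finset.mem_insert, Finset.mem_singleton, not_or] at hs
  simp [hu s hs.1 hs.2, phiP]

lemma div_eq_div_sub_one_of_pLap_eq_zero {k : ℕ} {p : ℝ} (hp : 1 < p) {r : G k × G k → ℝ}
    (hr_symm : ∀ x y : G k, r (x, y) = r (y, x)) {φ : G k → ℤ} {ϱ : ℤ → ℝ}
    (hrϱ : ∀ x y : G k, φ y = φ x + 1 → r (x, y) = ϱ (φ x)) {g : ℤ → ℝ} {x : G k}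
    {a b : Fin (k + 1)} (hab : a ≠ b) (ha : φ (x * gen k a) = φ x + 1)
    (hb : φ (x * gen k b) = φ x - 1) (hs : ∀ s, s ≠ a → s ≠ b → φ (x * gen k s) = φ x)
    (hharm : pLap k p r (fun y => g (φ y)) x = 0) :
    (g (φ x + 1) - g (φ x)) / ϱ (φ x) = (g (φ x) - g (φ x - 1)) / ϱ (φ x - 1) := by
  have hra : r (x, x * gen k a) = ϱ (φ x) := hrϱ _ _ ha
  have hrb : r (x, x * gen k b) = ϱ (φ x - 1) := by rw [hr_symm, hrϱ _ _ (by omega), hb]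
  rw [pLap_eq_add_of_forall_ne p r hab fun s hsa hsb => congrArg g (hs s hsa hsb), ha, hb, hra,
    hrb] at hharm
  rw [eq_neg_of_phiP_add_phiP_eq_zero hp hharm]
  ring

lemma cosetIdx_mul_gen {k : ℕ} (ρ : G k →* Equiv.Perm ℤ) (x : G k) (s : Fin (k + 1)) :
    cosetIdx ρ (x * gen k s) = ρ x (ρ (gen k s) 0) := by
  simp [cosetIdx, Equiv.Perm.mul_apply]

lemma isometry_of_reflections {k : ℕ} {ρ : G k →* Equiv.Perm ℤ} {i j : Fin (k + 1)}
    (hρi : ∀ n : ℤ, ρ (gen k i) n = 1 - n) (hρj : ∀ n : ℤ, ρ (gen k j) n = -1 - n)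
    (hρs : ∀ s : Fin (k + 1), s ≠ i → s ≠ j → ρ (gen k s) = 1) (x : G k) : Isometry (ρ x) := by
  refine isometry_of_isometry_gen (fun s => Isometry.of_dist_eq fun m n => ?_) x
  rw [Int.dist_eq', Int.dist_eq']
  by_cases hsi : s = i
  · subst hsi
    rw [hρi, hρi, abs_sub_comm]
    ring_nf
  by_cases hsj : s = j
  · subst hsj
    rw [hρj, hρj, abs_sub_comm]
    ring_nf
  simp [hρs s hsi hsj]

lemma exists_cosetIdx_neighbours {k : ℕ} {ρ : G k →* Equiv.Perm ℤ} {i j : Fin (k + 1)}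
    (hij : i ≠ j) (hρi : ∀ n : ℤ, ρ (gen k i) n = 1 - n) (hρj : ∀ n : ℤ, ρ (gen k j) n = -1 - n)
    (hρs : ∀ s : Fin (k + 1), s ≠ i → s ≠ j → ρ (gen k s) = 1) (x : G k) :
    ∃ a b, a ≠ b ∧ cosetIdx ρ (x * gen k a) = cosetIdx ρ x + 1 ∧
      cosetIdx ρ (x * gen k b) = cosetIdx ρ x - 1 ∧
      ∀ s, s ≠ a → s ≠ b → cosetIdx ρ (x * gen k s) = cosetIdx ρ x := by
  have hi : cosetIdx ρ (x * gen k i) = ρ x 1 := by rw [cosetIdx_mul_gen, hρi, sub_zero]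
  have hj : cosetIdx ρ (x * gen k j) = ρ x (-1) := by rw [cosetIdx_mul_gen, hρj, sub_zero]
  have hs : ∀ s, s ≠ i → s ≠ j → cosetIdx ρ (x * gen k s) = cosetIdx ρ x := fun s hsi hsj => by
    rw [cosetIdx_mul_gen, hρs s hsi hsj]
    rfl
  rcases Int.isometry_apply_one_neg_one (isometry_of_reflections hρi hρj hρs x) with h | h
  · exact ⟨i, j, hij, hi.trans h.1, hj.trans h.2, hs⟩
  · exact ⟨j, i, hij.symm, hj.trans h.2, hi.trans h.1, fun s hsj hsi => hs s hsi hsj⟩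

theorem stmt12_general (k : ℕ) (p : ℝ) (hp1 : 1 < p)
    (r : G k × G k → ℝ) (hr_symm : ∀ x y : G k, r (x, y) = r (y, x))
    (i j : Fin (k + 1)) (hij : i ≠ j)
    (ρ : G k →* Equiv.Perm ℤ)
    (hρi : ∀ n : ℤ, ρ (gen k i) n = 1 - n)
    (hρj : ∀ n : ℤ, ρ (gen k j) n = -1 - n)
    (hρs : ∀ s : Fin (k + 1), s ≠ i → s ≠ j → ρ (gen k s) = 1)
    (ϱ : ℤ → ℝ) (hϱ_pos : ∀ n : ℤ, 0 < ϱ n)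
    (hrϱ : ∀ x y : G k, cosetIdx ρ y = cosetIdx ρ x + 1 → r (x, y) = ϱ (cosetIdx ρ x))
    (g : ℤ → ℝ) (hharm : ∀ x : G k, pLap k p r (fun x => g (cosetIdx ρ x)) x = 0) :
    ∃ c : ℝ, ∀ n : ℤ, g (n + 1) - g n = c * ϱ n := by
  have hnbr := exists_cosetIdx_neighbours hij hρi hρj hρs
  have hsurj : Surjective (cosetIdx ρ) := surjective_of_exists_add_one_of_exists_sub_one
    (fun x => by obtain ⟨a, -, -, ha, -⟩ := hnbr x; exact ⟨_, ha⟩)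
    (fun x => by obtain ⟨-, b, -, -, hb, -⟩ := hnbr x; exact ⟨_, hb⟩)
  refine exists_mul_of_div_eq_div_sub_one (fun n => (hϱ_pos n).ne') fun n => ?_
  obtain ⟨x, rfl⟩ := hsurj n
  obtain ⟨a, b, hab, ha, hb, hs⟩ := hnbr x
  exact div_eq_div_sub_one_of_pLap_eq_zero hp1 hr_symm hrϱ hab ha hb hs (hharm x)

theorem stmt12 (k : ℕ) (hk : 1 ≤ k) (p : ℝ) (hp1 : 1 < p)
    (r : G k × G k → ℝ) (hr_symm : ∀ x y : G k, r (x, y) = r (y, x)) (hr_pos : ∀ x y : G k, 0 < r (x, y))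
    (i j : Fin (k + 1)) (hij : i ≠ j)
    (ρ : G k →* Equiv.Perm ℤ)
    (hρi : ∀ n : ℤ, ρ (gen k i) n = 1 - n)
    (hρj : ∀ n : ℤ, ρ (gen k j) n = -1 - n)
    (hρs : ∀ s : Fin (k + 1), s ≠ i → s ≠ j → ρ (gen k s) = 1)
    (ϱ : ℤ → ℝ) (hϱ_pos : ∀ n : ℤ, 0 < ϱ n)
    (hrϱ : ∀ x y : G k, cosetIdx ρ y = cosetIdx ρ x + 1 → r (x, y) = ϱ (cosetIdx ρ x))
    (g : ℤ → ℝ) (hharm : ∀ x : G k, pLap k p r (fun x => g (cosetIdx ρ x)) x = 0) :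
    ∃ c : ℝ, ∀ n : ℤ, g (n + 1) - g n = c * ϱ n :=
  stmt12_general k p hp1 r hr_symm i j hij ρ hρi hρj hρs ϱ hϱ_pos hrϱ g hharm
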